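/- Let σ > 0, t ∈ ℝ, and let f : ℝ → ℝ be bounded, measurable and differentiable. Suppose the set A_t := {x ∈ ℝ : f(x) = t} is finite and f'(x) ≠ 0 for every x ∈ A_t. Then the smoothed function satisfies #{x ∈ ℝ : (φ_σ * f)(x) = t} ≤ #A_t; in particular the number of solutions of the level equation at level t does not increase under Gaussian smoothing. -/

import Mathlib

/-- The density of the centered Gaussian distribution `N(0, σ²)` on `ℝ`. -/
noncomputable def gaussianKernel (σ u : ℝ) : ℝ :=
  (σ * Real.sqrt (2 * Real.pi))⁻¹ * Real.exp (-(u ^ 2) / (2 * σ ^ 2))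

open MeasureTheory Real Set Filter Topology

/-!
Write `f y - t = P y * G y` with `P y = ∏_{a ∈ A_t} (y - a)`: since every zero of `f - t` is
simple, `G` is continuous and has no zero, so `P y * (f y - t) = P y ^ 2 * G y` has constant sign.
Completing the square in the Gaussian gives `(φ_σ * f)(x) - t = exp (-x² / 2σ²) * L_w (x / σ²)`,
where `L_w z = ∫ exp (z y) w y dy` is the two-sided Laplace transform of
`w y = φ_σ y * (f y - t)`. A rule of signs for such transforms finishes: if `P y * w y ≥ 0` with
`deg P = n`, then `L_w` has at most `n` zeros. For `n = 0`, `L_w > 0`. Otherwise, for a root `a`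
of `P`, the derivative of `exp (-a x) * L_w x` is `exp (-a x) * L_{(y - a) w} x`, so by Rolle's
theorem a zero of `L_{(y - a) w}` lies between any two zeros of `L_w`, and induction on `n`
applies to `(y - a) * w y`.
-/

theorem Continuous.forall_pos_or_forall_neg {X α : Type*} [TopologicalSpace X]
    [PreconnectedSpace X] [LinearOrder α] [TopologicalSpace α] [OrderClosedTopology α] [Zero α]
    {g : X → α} (hg : Continuous g) (hg0 : ∀ x, g x ≠ 0) : (∀ x, 0 < g x) ∨ ∀ x, g x < 0 := by
  by_contra! ⟨⟨a, ha⟩, ⟨b, hb⟩⟩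
  obtain ⟨x, hx⟩ := intermediate_value_univ₂ hg continuous_const ha hb
  exact hg0 x hx

theorem Set.finite_and_ncard_le_of_interleaved {α : Type*} [LinearOrder α] {s t : Set α}
    (ht : t.Finite) (h : ∀ x ∈ s, ∀ y ∈ s, x < y → ∃ z ∈ t, x < z ∧ z < y) :
    s.Finite ∧ s.ncard ≤ t.ncard + 1 := by
  have hfinset : ∀ u : Finset α, ↑u ⊆ s → u.card ≤ t.ncard + 1 := fun u hu => by
    rw [Set.ncard_eq_toFinset_card _ ht]
    exact Finset.card_le_of_interleaved fun x hx y hy hxy _ => by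
      simpa using h x (hu hx) y (hu hy) hxy
  have hs : s.Finite := by
    by_contra hinf
    obtain ⟨u, hu, hcard⟩ := Set.Infinite.exists_subset_card_eq hinf (t.ncard + 2)
    have := hfinset u hu
    omega
  exact ⟨hs, by simpa [Set.ncard_eq_toFinset_card _ hs] using hfinset hs.toFinset (by simp)⟩

section Factor

variable {𝕜 : Type*} [NontriviallyNormedField 𝕜]

theorem exists_continuous_eq_prod_sub_mul (S : Finset 𝕜) {g : 𝕜 → 𝕜} (hg : Continuous g)
    (hdiff : ∀ a ∈ S, DifferentiableAt 𝕜 g a) (hzero : ∀ a ∈ S, g a = 0) :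
    ∃ G : 𝕜 → 𝕜, Continuous G ∧ ∀ y, g y = (∏ a ∈ S, (y - a)) * G y := by
  classical
  induction S using Finset.induction_on generalizing g with
  | empty => exact ⟨g, hg, fun y => by simp⟩
  | insert a S ha ih =>
    have hne : ∀ b ∈ S, b ≠ a := fun b hb => ne_of_mem_of_not_mem hb ha
    have hcont : Continuous (dslope g a) := continuous_iff_continuousAt.2 fun y => by
      rcases eq_or_ne y a with rfl | hy
      · exact continuousAt_dslope_same.2 (hdiff y (Finset.mem_insert_self _ _))
      · exact (continuousAt_dslope_of_ne hy).2 hg.continuousAt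
    obtain ⟨G, hG, hfac⟩ := ih hcont
      (fun b hb => (differentiableAt_dslope_of_ne (hne b hb)).2
        (hdiff b (Finset.mem_insert_of_mem hb)))
      (fun b hb => by
        rw [dslope_of_ne _ (hne b hb), slope_def_field, hzero b (Finset.mem_insert_of_mem hb),
          hzero a (Finset.mem_insert_self a S), sub_self, zero_div])
    refine ⟨G, hG, fun y => ?_⟩
    rw [Finset.prod_insert ha, mul_assoc, ← hfac, ← smul_eq_mul, sub_smul_dslope,
      hzero a (Finset.mem_insert_self a S), sub_zero]

theorem hasDerivAt_of_forall_eq_sub_mul {g k : 𝕜 → 𝕜} {a : 𝕜} (hk : ContinuousAt k a)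
    (h : ∀ y, g y = (y - a) * k y) : HasDerivAt g (k a) a := by
  rw [hasDerivAt_iff_tendsto_slope]
  refine (hk.tendsto.mono_left nhdsWithin_le_nhds).congr' ?_
  filter_upwards [self_mem_nhdsWithin] with y hy
  rw [slope_def_field, h, h, sub_self, zero_mul, sub_zero,
    mul_div_cancel_left₀ _ (sub_ne_zero.2 hy)]

end Factor

theorem prod_sub_mul_nonneg_or_nonpos {g : ℝ → ℝ} {S : Finset ℝ} (hg : Continuous g)
    (hS : ∀ y, g y = 0 ↔ y ∈ S) (hderiv : ∀ a ∈ S, deriv g a ≠ 0) :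
    (∀ y, 0 ≤ (∏ a ∈ S, (y - a)) * g y) ∨ ∀ y, (∏ a ∈ S, (y - a)) * g y ≤ 0 := by
  obtain ⟨G, hG, hfac⟩ := exists_continuous_eq_prod_sub_mul S hg
    (fun a ha => differentiableAt_of_deriv_ne_zero (hderiv a ha)) (fun a ha => (hS a).2 ha)
  have hG0 : ∀ y, G y ≠ 0 := by
    intro y hy
    by_cases hyS : y ∈ S
    · have hd : HasDerivAt g ((∏ b ∈ S.erase y, (y - b)) * G y) y :=
        hasDerivAt_of_forall_eq_sub_mul (k := fun z => (∏ b ∈ S.erase y, (z - b)) * G z)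
          (by fun_prop) fun z => by rw [hfac, ← Finset.mul_prod_erase S _ hyS, mul_assoc]
      exact hderiv y hyS (by rw [hd.deriv, hy, mul_zero])
    · exact hyS ((hS y).1 (by rw [hfac, hy, mul_zero]))
  have hsq : ∀ y, (∏ a ∈ S, (y - a)) * g y = (∏ a ∈ S, (y - a)) ^ 2 * G y := fun y => by
    rw [hfac]; ring
  rcases hG.forall_pos_or_forall_neg hG0 with hpos | hneg
  · exact Or.inl fun y => hsq y ▸ mul_nonneg (sq_nonneg _) (hpos y).le
  · exact Or.inr fun y => hsq y ▸ mul_nonpos_of_nonneg_of_nonpos (sq_nonneg _) (hneg y).le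

/-- The two-sided Laplace transform with kernel `exp (x * y)`, not the usual `exp (-x * y)`. -/
noncomputable def twoSidedLaplace (w : ℝ → ℝ) (x : ℝ) : ℝ :=
  ∫ y, exp (x * y) * w y

namespace twoSidedLaplace

variable {w : ℝ → ℝ}

theorem integrable_exp_mul_abs_mul (hw : ∀ x, Integrable fun y => exp (x * y) * w y) (c x : ℝ) :
    Integrable fun y => exp (c * |y|) * (exp (x * y) * w y) := by
  refine ((hw (x + c)).norm.add (hw (x - c)).norm).mono'
    ((by fun_prop : Continuous fun y => exp (c * |y|)).aestronglyMeasurable.mul (hw x).1)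
    (Eventually.of_forall fun y => ?_)
  have hexp : exp (c * |y|) * exp (x * y) ≤ exp ((x + c) * y) + exp ((x - c) * y) := by
    rw [← exp_add]
    rcases abs_cases y with ⟨hy, -⟩ | ⟨hy, -⟩ <;> rw [hy]
    · rw [show c * y + x * y = (x + c) * y by ring]
      linarith [exp_pos ((x - c) * y)]
    · rw [show c * -y + x * y = (x - c) * y by ring]
      linarith [exp_pos ((x + c) * y)]
  simp only [norm_mul, norm_eq_abs, abs_exp, Pi.add_apply, ← mul_assoc, ← add_mul]
  exact mul_le_mul_of_nonneg_right hexp (abs_nonneg _)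

theorem integrable_exp_mul_id_mul (hw : ∀ x, Integrable fun y => exp (x * y) * w y) (x : ℝ) :
    Integrable fun y => exp (x * y) * (y * w y) := by
  refine (integrable_exp_mul_abs_mul hw 1 x).norm.mono'
    ((by fun_prop : Continuous fun y => exp (x * y)).aestronglyMeasurable.mul
      (continuous_id.aestronglyMeasurable.mul (by simpa using (hw 0).1)))
    (Eventually.of_forall fun y => ?_)
  have hy : |y| ≤ exp |y| := by linarith [add_one_le_exp |y|]
  simp only [norm_mul, norm_eq_abs, abs_exp, one_mul]
  calc exp (x * y) * (|y| * |w y|) = |y| * (exp (x * y) * |w y|) := by ring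
    _ ≤ exp |y| * (exp (x * y) * |w y|) := by gcongr

theorem hasDerivAt (hw : ∀ x, Integrable fun y => exp (x * y) * w y) (x : ℝ) :
    HasDerivAt (twoSidedLaplace w) (twoSidedLaplace (fun y => y * w y) x) x := by
  refine (hasDerivAt_integral_of_dominated_loc_of_deriv_le (Metric.ball_mem_nhds x one_pos)
    (Eventually.of_forall fun x' => (hw x').1) (hw x) (integrable_exp_mul_id_mul hw x).1
    (F' := fun x' y => exp (x' * y) * (y * w y))
    (bound := fun y => ‖exp (2 * |y|) * (exp (x * y) * w y)‖) ?_
    (integrable_exp_mul_abs_mul hw 2 x).norm ?_).2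
  · refine Eventually.of_forall fun y x' hx' => ?_
    rw [Metric.mem_ball, dist_eq] at hx'
    have hexp : exp (x' * y) ≤ exp |y| * exp (x * y) := by
      rw [← exp_add, exp_le_exp]
      have : (x' - x) * y ≤ |y| := by
        calc (x' - x) * y ≤ |x' - x| * |y| := by rw [← abs_mul]; exact le_abs_self _
          _ ≤ 1 * |y| := by gcongr
          _ = |y| := one_mul _
      linarith
    have hy : |y| ≤ exp |y| := by linarith [add_one_le_exp |y|]
    simp only [norm_mul, norm_eq_abs, abs_exp]
    calc exp (x' * y) * (|y| * |w y|) ≤ (exp |y| * exp (x * y)) * (exp |y| * |w y|) := by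
          gcongr
      _ = exp (2 * |y|) * (exp (x * y) * |w y|) := by rw [two_mul, exp_add]; ring
  · refine Eventually.of_forall fun y x' _ => ?_
    exact (((hasDerivAt_id x').mul_const y).exp.mul_const (w y)).congr_deriv (by simp only [id_eq, one_mul]; ring)

theorem sub_mul_eq (hw : ∀ x, Integrable fun y => exp (x * y) * w y) (a x : ℝ) :
    twoSidedLaplace (fun y => (y - a) * w y) x
      = twoSidedLaplace (fun y => y * w y) x - a * twoSidedLaplace w x := by
  simp only [twoSidedLaplace, ← integral_const_mul]
  rw [← integral_sub (integrable_exp_mul_id_mul hw x) ((hw x).const_mul a)]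
  congr 1 with y
  ring

theorem exists_sub_mul_eq_zero (hw : ∀ x, Integrable fun y => exp (x * y) * w y) (a : ℝ)
    {x₁ x₂ : ℝ} (hlt : x₁ < x₂)
    (h₁ : twoSidedLaplace w x₁ = 0) (h₂ : twoSidedLaplace w x₂ = 0) :
    ∃ z ∈ Ioo x₁ x₂, twoSidedLaplace (fun y => (y - a) * w y) z = 0 := by
  have hderiv : ∀ x, HasDerivAt (fun x => exp (-a * x) * twoSidedLaplace w x)
      (exp (-a * x) * twoSidedLaplace (fun y => (y - a) * w y) x) x := fun x =>
    (((hasDerivAt_id x).const_mul (-a)).exp.mul (hasDerivAt hw x)).congr_deriv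
      (by rw [sub_mul_eq hw]; simp only [id_eq, neg_mul, mul_one, mul_neg]; ring)
  obtain ⟨z, hz, hz0⟩ := exists_hasDerivAt_eq_zero hlt
    (fun x _ => (hderiv x).continuousAt.continuousWithinAt) (by simp [h₁, h₂])
    (fun x _ => hderiv x)
  exact ⟨z, hz, (mul_eq_zero.1 hz0).resolve_left (exp_ne_zero _)⟩

theorem pos (hw : ∀ x, Integrable fun y => exp (x * y) * w y) (hw0 : ∀ y, 0 ≤ w y)
    (hsupp : 0 < volume (Function.support w)) (x : ℝ) :
    0 < twoSidedLaplace w x := by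
  refine (integral_pos_iff_support_of_nonneg (fun y => mul_nonneg (exp_pos _).le (hw0 y))
    (hw x)).2 ?_
  convert hsupp using 2
  ext y
  simp [exp_ne_zero]

theorem zeroSet_finite_and_ncard_le_of_nonneg (S : Finset ℝ)
    (hw : ∀ x, Integrable fun y => exp (x * y) * w y)
    (hsign : ∀ y, 0 ≤ (∏ a ∈ S, (y - a)) * w y) (hsupp : 0 < volume (Function.support w)) :
    {x | twoSidedLaplace w x = 0}.Finite ∧ {x | twoSidedLaplace w x = 0}.ncard ≤ S.card := by
  classical
  induction S using Finset.induction_on generalizing w with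
  | empty =>
    have hpos := pos hw (by simpa using hsign) hsupp
    simp [(hpos _).ne']
  | insert a S ha ih =>
    have hsupp' : 0 < volume (Function.support fun y => (y - a) * w y) :=
      calc 0 < volume (Function.support w) := hsupp
        _ = volume (Function.support w \ {a}) := (measure_sdiff_null (measure_singleton a)).symm
        _ ≤ _ := measure_mono fun y hy => mul_ne_zero (sub_ne_zero.2 hy.2) hy.1
    obtain ⟨hfin, hcard⟩ := ih
      (fun x => ((integrable_exp_mul_id_mul hw x).sub ((hw x).const_mul a)).congr
        (Eventually.of_forall fun y => by simp only [Pi.sub_apply]; ring))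
      (fun y => by simpa only [Finset.prod_insert ha, mul_comm (y - a), mul_assoc] using hsign y)
      hsupp'
    obtain ⟨hfin', hcard'⟩ := Set.finite_and_ncard_le_of_interleaved
      (s := {x | twoSidedLaplace w x = 0}) hfin fun x hx y hy hxy => by
        obtain ⟨z, hz, hz0⟩ := exists_sub_mul_eq_zero hw a hxy hx hy
        exact ⟨z, hz0, hz⟩
    refine ⟨hfin', ?_⟩
    rw [Finset.card_insert_of_notMem ha]
    omega

theorem neg (x : ℝ) : twoSidedLaplace (fun y => -w y) x = -twoSidedLaplace w x := by
  simp [twoSidedLaplace, integral_neg]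

theorem zeroSet_finite_and_ncard_le (S : Finset ℝ)
    (hw : ∀ x, Integrable fun y => exp (x * y) * w y)
    (hsign : (∀ y, 0 ≤ (∏ a ∈ S, (y - a)) * w y) ∨ ∀ y, (∏ a ∈ S, (y - a)) * w y ≤ 0)
    (hsupp : 0 < volume (Function.support w)) :
    {x | twoSidedLaplace w x = 0}.Finite ∧ {x | twoSidedLaplace w x = 0}.ncard ≤ S.card := by
  rcases hsign with hnonneg | hnonpos
  · exact zeroSet_finite_and_ncard_le_of_nonneg S hw hnonneg hsupp
  · simpa [neg] using zeroSet_finite_and_ncard_le_of_nonneg (w := fun y => -w y) S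
      (fun x => by simpa using (hw x).neg) (fun y => by simpa using hnonpos y)
      (by simpa using hsupp)

end twoSidedLaplace

section Gaussian

variable {σ : ℝ}

theorem gaussianKernel_eq_gaussianPDFReal (hσ : 0 ≤ σ) :
    gaussianKernel σ = ProbabilityTheory.gaussianPDFReal 0 (σ ^ 2).toNNReal := by
  ext u
  simp only [gaussianKernel, ProbabilityTheory.gaussianPDFReal, Real.coe_toNNReal _ (sq_nonneg σ),
    sub_zero]
  rw [mul_comm (2 * π), sqrt_mul (sq_nonneg σ), sqrt_sq hσ]

theorem gaussianKernel_pos (hσ : 0 < σ) (u : ℝ) : 0 < gaussianKernel σ u := by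
  rw [gaussianKernel_eq_gaussianPDFReal hσ.le]
  exact ProbabilityTheory.gaussianPDFReal_pos _ _ _ (Real.toNNReal_pos.2 (by positivity)).ne'

theorem integrable_gaussianKernel (hσ : 0 ≤ σ) : Integrable (gaussianKernel σ) := by
  rw [gaussianKernel_eq_gaussianPDFReal hσ]
  exact ProbabilityTheory.integrable_gaussianPDFReal _ _

theorem integral_gaussianKernel (hσ : 0 < σ) : ∫ u, gaussianKernel σ u = 1 := by
  rw [gaussianKernel_eq_gaussianPDFReal hσ.le]
  exact ProbabilityTheory.integral_gaussianPDFReal_eq_one _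
    (Real.toNNReal_pos.2 (by positivity)).ne'

theorem gaussianKernel_sub (hσ : σ ≠ 0) (x y : ℝ) :
    gaussianKernel σ (x - y)
      = exp (-x ^ 2 / (2 * σ ^ 2)) * (exp (x / σ ^ 2 * y) * gaussianKernel σ y) := by
  simp only [gaussianKernel]
  rw [show ∀ a b c k : ℝ, exp a * (exp b * (k * exp c)) = k * exp (a + b + c) from
    fun a b c k => by rw [exp_add, exp_add]; ring]
  congr 2
  field_simp
  ring

theorem integrable_exp_mul_gaussianKernel (hσ : 0 < σ) (x : ℝ) :
    Integrable fun y => exp (x * y) * gaussianKernel σ y := by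
  refine (((integrable_gaussianKernel hσ.le).comp_sub_left (σ ^ 2 * x)).const_mul
    (exp ((σ ^ 2 * x) ^ 2 / (2 * σ ^ 2)))).congr (Eventually.of_forall fun y => ?_)
  simp only [gaussianKernel_sub hσ.ne', mul_div_cancel_left₀ x (pow_ne_zero 2 hσ.ne'), neg_div,
    ← mul_assoc, ← exp_add, add_neg_cancel_left]

theorem integrable_exp_mul_gaussianKernel_mul (hσ : 0 < σ) {g : ℝ → ℝ}
    (hg : AEStronglyMeasurable g) {C : ℝ} (hgC : ∀ y, |g y| ≤ C) (x : ℝ) :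
    Integrable fun y => exp (x * y) * (gaussianKernel σ y * g y) := by
  simpa only [mul_assoc] using
    (integrable_exp_mul_gaussianKernel hσ x).mul_bdd hg (Eventually.of_forall hgC)

theorem integral_gaussianKernel_mul_sub (hσ : 0 < σ) {f : ℝ → ℝ} (hf : Measurable f) {C : ℝ}
    (hfC : ∀ y, |f y| ≤ C) (t x : ℝ) :
    (∫ u, gaussianKernel σ u * f (x - u)) - t
      = exp (-x ^ 2 / (2 * σ ^ 2))
        * twoSidedLaplace (fun y => gaussianKernel σ y * (f y - t)) (x / σ ^ 2) := by
  have hint : Integrable fun u => gaussianKernel σ u * f (x - u) :=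
    (integrable_gaussianKernel hσ.le).mul_bdd
      (hf.comp (measurable_const.sub measurable_id)).aestronglyMeasurable
      (Eventually.of_forall fun u => hfC (x - u))
  calc (∫ u, gaussianKernel σ u * f (x - u)) - t
      = ∫ u, gaussianKernel σ u * (f (x - u) - t) := by
        simp_rw [mul_sub]
        rw [integral_sub hint ((integrable_gaussianKernel hσ.le).mul_const t), integral_mul_const,
          integral_gaussianKernel hσ, one_mul]
    _ = ∫ y, gaussianKernel σ (x - y) * (f y - t) := by
        rw [← integral_sub_left_eq_self (fun y => gaussianKernel σ (x - y) * (f y - t)) volume x]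
        simp only [sub_sub_cancel]
    _ = _ := by
        simp_rw [gaussianKernel_sub hσ.ne']
        rw [twoSidedLaplace, ← integral_const_mul]
        congr 1 with y
        ring

theorem setOf_integral_gaussianKernel_mul_eq (hσ : 0 < σ) {f : ℝ → ℝ} (hf : Measurable f) {C : ℝ}
    (hfC : ∀ y, |f y| ≤ C) (t : ℝ) :
    {x | (∫ u, gaussianKernel σ u * f (x - u)) = t}
      = (σ ^ 2 * ·) '' {z | twoSidedLaplace (fun y => gaussianKernel σ y * (f y - t)) z = 0} := by
  ext x
  simp only [mem_ofPred_eq, mem_image]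
  rw [← sub_eq_zero, integral_gaussianKernel_mul_sub hσ hf hfC, mul_eq_zero,
    or_iff_right (exp_ne_zero _)]
  constructor
  · exact fun h => ⟨x / σ ^ 2, h, mul_div_cancel₀ x (pow_ne_zero 2 hσ.ne')⟩
  · rintro ⟨z, hz, rfl⟩
    rwa [mul_div_cancel_left₀ z (pow_ne_zero 2 hσ.ne')]

end Gaussian

/-- **Non-increasing level-crossing count under Gaussian smoothing.** If `f` is bounded,
measurable and differentiable, the level set `A_t = {x : f x = t}` is finite, and `f' ≠ 0`
on `A_t`, then the level set of the Gaussian-smoothed function at level `t` is finite with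
cardinality at most that of `A_t`. -/
theorem level_count_nonincreasing
    (σ : ℝ) (hσ : 0 < σ) (t : ℝ) (f : ℝ → ℝ)
    (hbd : ∃ C, ∀ x, |f x| ≤ C) (hmeas : Measurable f) (hdiff : Differentiable ℝ f)
    (hA : {x : ℝ | f x = t}.Finite)
    (hA' : ∀ x, f x = t → deriv f x ≠ 0) :
    {x : ℝ | (∫ u, gaussianKernel σ u * f (x - u)) = t}.Finite ∧
      {x : ℝ | (∫ u, gaussianKernel σ u * f (x - u)) = t}.ncard
        ≤ {x : ℝ | f x = t}.ncard := by
  obtain ⟨C, hC⟩ := hbd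
  have hφ := gaussianKernel_pos hσ
  have hsign := prod_sub_mul_nonneg_or_nonpos (g := fun y => f y - t) (S := hA.toFinset)
    (hdiff.continuous.sub continuous_const) (by simp [sub_eq_zero])
    (fun a ha => by simpa [deriv_sub_const] using hA' a (by simpa using ha))
  have hsupp : 0 < volume (Function.support fun y => gaussianKernel σ y * (f y - t)) := by
    rw [show (Function.support fun y => gaussianKernel σ y * (f y - t)) = {y | f y = t}ᶜ by
      ext y; simp [(hφ y).ne', sub_eq_zero], pos_iff_ne_zero]
    exact fun h0 => by simpa using measure_union_null (hA.measure_zero volume) h0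
  obtain ⟨hfin, hcard⟩ := twoSidedLaplace.zeroSet_finite_and_ncard_le hA.toFinset
    (integrable_exp_mul_gaussianKernel_mul hσ (g := fun y => f y - t) (C := C + |t|)
      (hmeas.sub_const t).aestronglyMeasurable fun y => by linarith [abs_sub (f y) t, hC y])
    (hsign.imp (fun h y => by simpa only [mul_left_comm] using mul_nonneg (hφ y).le (h y))
      fun h y => by
        simpa only [mul_left_comm] using mul_nonpos_of_nonneg_of_nonpos (hφ y).le (h y))
    hsupp
  rw [setOf_integral_gaussianKernel_mul_eq hσ hmeas hC,
    ncard_image_of_injective _ (mul_right_injective₀ (pow_ne_zero 2 hσ.ne')),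
    ncard_eq_toFinset_card _ hA]
  exact ⟨hfin.image _, hcard⟩
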